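/- arXiv:1701.04157 — 3 statements merged into one kernel-verified Lean document; each statement's English description precedes it below -/
import Mathlib

section
/- Let A ∈ ℝ^{m×m} be positive definite, meaning xᵀAx > 0 for every nonzero x ∈ ℝ^m (A need not be symmetric), let B ∈ ℝ^{m×n} have full column rank (rank B = n), and let α ≥ 0, β > 0. Then every eigenvalue of the MGSSP iteration matrix has modulus less than one: if λ ∈ ℂ and there exists a nonzero w ∈ ℂ^{m+n} with Q(α,β)w = λ P(α,β)w, then |λ| < 1. Consequently the spectral radius of T(α,β) = P(α,β)⁻¹Q(α,β) is less than 1, so the MGSSP iteration method converges unconditionally for all α ≥ 0 and β > 0. -/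
open Matrix

/-- The MGSSP splitting matrix `P(α,β) = [[αI+2A, 2B], [−2Bᵀ, βI]]`. -/
noncomputable def Pmat {m n : ℕ} (A : Matrix (Fin m) (Fin m) ℝ) (B : Matrix (Fin m) (Fin n) ℝ)
    (α β : ℝ) : Matrix (Fin m ⊕ Fin n) (Fin m ⊕ Fin n) ℝ :=
  fromBlocks (α • 1 + (2 : ℝ) • A) ((2 : ℝ) • B) (-((2 : ℝ) • Bᵀ)) (β • 1)

/-- The MGSSP splitting matrix `Q(α,β) = [[αI+A, B], [−Bᵀ, βI]]`. -/
noncomputable def Qmat {m n : ℕ} (A : Matrix (Fin m) (Fin m) ℝ) (B : Matrix (Fin m) (Fin n) ℝ)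
    (α β : ℝ) : Matrix (Fin m ⊕ Fin n) (Fin m ⊕ Fin n) ℝ :=
  fromBlocks (α • 1 + A) B (-Bᵀ) (β • 1)

/-!
With the saddle-point matrix `𝒜 = [[A, B], [-Bᴴ, 0]]` and `D = diag(αI, βI)` one has
`Q = D + 𝒜` and `P = D + 2𝒜`. Pairing `Qw = λPw` with `w = (u, v)` gives `s + t = λ(s + 2t)`
where `s = w*Dw ≥ 0` and `t = w*𝒜w`; the off-diagonal blocks of `𝒜` are skew-Hermitian, so
`Re t = Re(u*Au) > 0` once `u ≠ 0`, and then `|s + t| < |s + 2t|`. If `u = 0`, the second block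
row forces `λ = 1`, and the first then gives `Bv = 0`, excluded by the full column rank of `B`.
-/

open scoped ComplexOrder

theorem Complex.norm_lt_one_of_add_eq_mul_add_two_mul {s t lam : ℂ} (hs : 0 ≤ s)
    (ht : 0 < t.re) (h : s + t = lam * (s + 2 * t)) : ‖lam‖ < 1 := by
  obtain ⟨hs_re, hs_im⟩ := Complex.nonneg_iff.mp hs
  have hlt : ‖s + t‖ < ‖s + 2 * t‖ := by
    rw [← sq_lt_sq₀ (norm_nonneg _) (norm_nonneg _), Complex.sq_norm, Complex.sq_norm,
      Complex.normSq_apply, Complex.normSq_apply]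
    simp only [Complex.add_re, Complex.add_im, Complex.mul_re, Complex.mul_im, ← hs_im,
      Complex.re_ofNat, Complex.im_ofNat]
    nlinarith [sq_nonneg t.im]
  rw [h, norm_mul] at hlt
  exact lt_of_mul_lt_mul_right (by rwa [one_mul]) (norm_nonneg _)

theorem Matrix.norm_lt_one_of_add_mulVec_eq_smul {ι : Type*} [Fintype ι] {D H : Matrix ι ι ℂ}
    (hD : D.PosSemidef) {w : ι → ℂ} (hH : 0 < (star w ⬝ᵥ H *ᵥ w).re) {lam : ℂ}
    (h : (D + H) *ᵥ w = lam • ((D + (2 : ℂ) • H) *ᵥ w)) : ‖lam‖ < 1 := by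
  refine Complex.norm_lt_one_of_add_eq_mul_add_two_mul (hD.dotProduct_mulVec_nonneg w) hH ?_
  have := congrArg (star w ⬝ᵥ ·) h
  simp only [add_mulVec, two_smul, dotProduct_add, dotProduct_smul, smul_eq_mul] at this
  linear_combination this

theorem Matrix.posSemidef_fromBlocks_smul_one {m n : Type*} [DecidableEq m] [DecidableEq n]
    {α β : ℂ} (hα : 0 ≤ α) (hβ : 0 ≤ β) :
    (fromBlocks (α • 1 : Matrix m m ℂ) 0 0 (β • 1 : Matrix n n ℂ)).PosSemidef := by
  rw [smul_one_eq_diagonal, smul_one_eq_diagonal, fromBlocks_diagonal]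
  exact PosSemidef.diagonal fun i => by cases i <;> simpa

section SaddlePoint

variable {m n : Type*} [Fintype m] [Fintype n]

def saddlePointMatrix (A : Matrix m m ℂ) (B : Matrix m n ℂ) : Matrix (m ⊕ n) (m ⊕ n) ℂ :=
  fromBlocks A B (-Bᴴ) 0

theorem re_star_dotProduct_saddlePointMatrix_mulVec (A : Matrix m m ℂ) (B : Matrix m n ℂ)
    (u : m → ℂ) (v : n → ℂ) :
    (star (Sum.elim u v) ⬝ᵥ saddlePointMatrix A B *ᵥ Sum.elim u v).re
      = (star u ⬝ᵥ A *ᵥ u).re := by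
  have hskew : star v ⬝ᵥ Bᴴ *ᵥ u = star (star u ⬝ᵥ B *ᵥ v) := by
    rw [star_dotProduct, star_mulVec, conjTranspose_conjTranspose, dotProduct_mulVec]
  simp only [saddlePointMatrix, fromBlocks_mulVec, Sum.elim_comp_inl, Sum.elim_comp_inr,
    Function.star_sumElim, sumElim_dotProduct_sumElim, zero_mulVec, add_zero, dotProduct_add,
    dotProduct_neg, neg_mulVec, hskew, Complex.add_re, Complex.neg_re, Complex.star_def,
    Complex.conj_re]
  ring

theorem saddlePoint_eigenvector_eq_zero_of_comp_inl_eq_zero [DecidableEq m] [DecidableEq n]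
    {A : Matrix m m ℂ} {B : Matrix m n ℂ} (hB : Function.Injective B.mulVec) (α : ℂ) {β : ℂ}
    (hβ : β ≠ 0) {lam : ℂ} {w : m ⊕ n → ℂ} (hu : w ∘ Sum.inl = 0)
    (h : (fromBlocks (α • 1) 0 0 (β • 1) + saddlePointMatrix A B) *ᵥ w
      = lam • ((fromBlocks (α • 1) 0 0 (β • 1) + (2 : ℂ) • saddlePointMatrix A B) *ᵥ w)) :
    w = 0 := by
  rw [← Sum.elim_comp_inl_inr w, hu] at h ⊢
  set v := w ∘ Sum.inr
  simp only [saddlePointMatrix, fromBlocks_add, fromBlocks_smul, fromBlocks_mulVec,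
    Sum.elim_comp_inl, Sum.elim_comp_inr, mulVec_zero, add_zero, zero_add, smul_zero,
    smul_mulVec, one_mulVec] at h
  have htop : B *ᵥ v = lam • (2 : ℂ) • B *ᵥ v :=
    funext fun i => by simpa using congrFun h (Sum.inl i)
  have hbot (j : n) : β * v j = lam * (β * v j) := by simpa using congrFun h (Sum.inr j)
  suffices hv : v = 0 by rw [hv, Sum.elim_zero_zero]
  by_contra hv
  obtain ⟨j, hj⟩ := Function.ne_iff.mp hv
  have hlam : lam = 1 :=
    mul_right_cancel₀ (mul_ne_zero hβ hj) ((hbot j).symm.trans (one_mul _).symm)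
  refine hv (hB ?_)
  rw [mulVec_zero]
  simpa [hlam, two_smul] using htop

end SaddlePoint

section Complexification

variable {m n : Type*} [Fintype m] [Fintype n]

theorem Matrix.mulVec_map_algebraMap_injective {K L : Type*} [Field K] [Field L] [Algebra K L]
    {B : Matrix m n K} (hB : B.rank = Fintype.card n) :
    Function.Injective (B.map (algebraMap K L)).mulVec := by
  have hcols : LinearIndependent K B.col := by
    rw [linearIndependent_iff_card_eq_finrank_span, ← hB, rank_eq_finrank_span_cols]
    rfl
  rw [mulVec_injective_iff]
  exact linearIndependent_algebraMap_comp_iff.mpr hcols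

theorem Matrix.re_star_dotProduct_map_ofReal_mulVec (A : Matrix m m ℝ) (u : m → ℂ) :
    (star u ⬝ᵥ A.map Complex.ofReal *ᵥ u).re
      = (fun i => (u i).re) ⬝ᵥ A *ᵥ (fun i => (u i).re)
        + (fun i => (u i).im) ⬝ᵥ A *ᵥ (fun i => (u i).im) := by
  simp only [dotProduct, mulVec, Pi.star_apply, map_apply, Complex.re_sum,
    Finset.mul_sum, ← Finset.sum_add_distrib]
  refine Finset.sum_congr rfl fun i _ => Finset.sum_congr rfl fun j _ => ?_
  simp only [Complex.mul_re, Complex.mul_im, Complex.ofReal_re, Complex.ofReal_im,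
    Complex.star_def, Complex.conj_re, Complex.conj_im]
  ring

theorem Matrix.re_star_dotProduct_map_ofReal_mulVec_pos {A : Matrix m m ℝ}
    (hA : ∀ x : m → ℝ, x ≠ 0 → 0 < x ⬝ᵥ A *ᵥ x) {u : m → ℂ} (hu : u ≠ 0) :
    0 < (star u ⬝ᵥ A.map Complex.ofReal *ᵥ u).re := by
  have hA' (x : m → ℝ) : 0 ≤ x ⬝ᵥ A *ᵥ x := by
    rcases eq_or_ne x 0 with rfl | hx
    · simp
    · exact (hA x hx).le
  rw [re_star_dotProduct_map_ofReal_mulVec]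
  by_cases hre : (fun i => (u i).re) = 0
  · have him : (fun i => (u i).im) ≠ 0 := fun him =>
      hu (funext fun i => Complex.ext (congrFun hre i) (congrFun him i))
    linarith [hA' fun i => (u i).re, hA _ him]
  · linarith [hA _ hre, hA' fun i => (u i).im]

end Complexification

theorem map_ofReal_Qmat {m n : ℕ} (A : Matrix (Fin m) (Fin m) ℝ) (B : Matrix (Fin m) (Fin n) ℝ)
    (α β : ℝ) :
    (Qmat A B α β).map Complex.ofReal = fromBlocks ((α : ℂ) • 1) 0 0 ((β : ℂ) • 1)
      + saddlePointMatrix (A.map Complex.ofReal) (B.map Complex.ofReal) := by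
  ext (i | i) (j | j) <;> simp [Qmat, saddlePointMatrix, one_apply, apply_ite Complex.ofReal]

theorem map_ofReal_Pmat {m n : ℕ} (A : Matrix (Fin m) (Fin m) ℝ) (B : Matrix (Fin m) (Fin n) ℝ)
    (α β : ℝ) :
    (Pmat A B α β).map Complex.ofReal = fromBlocks ((α : ℂ) • 1) 0 0 ((β : ℂ) • 1)
      + (2 : ℂ) • saddlePointMatrix (A.map Complex.ofReal) (B.map Complex.ofReal) := by
  ext (i | i) (j | j) <;> simp [Pmat, saddlePointMatrix, one_apply, apply_ite Complex.ofReal]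

/-- Theorem 3.1: every eigenvalue of the MGSSP iteration matrix has modulus less
than one, i.e. the MGSSP iteration method converges unconditionally for all
`α ≥ 0` and `β > 0`. -/
theorem mgssp_unconditional_convergence {m n : ℕ}
    (A : Matrix (Fin m) (Fin m) ℝ) (B : Matrix (Fin m) (Fin n) ℝ)
    (hA : ∀ x : Fin m → ℝ, x ≠ 0 → 0 < x ⬝ᵥ (A *ᵥ x))
    (hB : B.rank = n)
    (α β : ℝ) (hα : 0 ≤ α) (hβ : 0 < β)
    (lam : ℂ) (w : Fin m ⊕ Fin n → ℂ) (hw : w ≠ 0)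
    (heig : (Qmat A B α β).map Complex.ofReal *ᵥ w
        = lam • ((Pmat A B α β).map Complex.ofReal *ᵥ w)) :
    ‖lam‖ < 1 := by
  rw [map_ofReal_Qmat, map_ofReal_Pmat] at heig
  by_cases hu : w ∘ Sum.inl = 0
  · have hB' : Function.Injective (B.map Complex.ofReal).mulVec :=
      mulVec_map_algebraMap_injective (hB.trans (Fintype.card_fin n).symm)
    exact absurd (saddlePoint_eigenvector_eq_zero_of_comp_inl_eq_zero hB' _
      (Complex.ofReal_ne_zero.mpr hβ.ne') hu heig) hw
  · refine norm_lt_one_of_add_mulVec_eq_smul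
      (posSemidef_fromBlocks_smul_one (Complex.zero_le_real.mpr hα)
        (Complex.zero_le_real.mpr hβ.le)) ?_ heig
    rw [← Sum.elim_comp_inl_inr w, re_star_dotProduct_saddlePointMatrix_mulVec]
    exact re_star_dotProduct_map_ofReal_mulVec_pos hA hu
end

section
/- Let A ∈ ℝ^{m×m} be positive definite, meaning xᵀAx > 0 for every nonzero x ∈ ℝ^m (A need not be symmetric), let B ∈ ℝ^{m×n} have full column rank (rank B = n), and let α ≥ 0, β > 0. Suppose λ ∈ ℂ and w = (u, v) ∈ ℂ^{m+n} is nonzero with 𝒜w = λ P(α,β)w, and suppose Bᵀu = 0. Then u ≠ 0, v = 0, λ ≠ 0, and writing a₁ + ib₁ = (u*Au)/(u*u) with a₁, b₁ ∈ ℝ, one has λ = (a₁ + ib₁)/(α + 2a₁ + 2ib₁). -/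
open Matrix

/-- The saddle point matrix `𝒜 = [[A, B], [−Bᵀ, 0]]`. -/
noncomputable def Amat {m n : ℕ} (A : Matrix (Fin m) (Fin m) ℝ) (B : Matrix (Fin m) (Fin n) ℝ) :
    Matrix (Fin m ⊕ Fin n) (Fin m ⊕ Fin n) ℝ :=
  fromBlocks A B (-Bᵀ) 0

/-- Real part of a complex Rayleigh-type quadratic form splits into real and imaginary parts. -/
lemma mgssp_aux_re_quad {m : ℕ} (A : Matrix (Fin m) (Fin m) ℝ) (u : Fin m → ℂ) :
    (star u ⬝ᵥ (A.map Complex.ofReal *ᵥ u)).re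
      = (fun i => (u i).re) ⬝ᵥ (A *ᵥ fun i => (u i).re)
        + (fun i => (u i).im) ⬝ᵥ (A *ᵥ fun i => (u i).im) := by
  have key : ∀ i j, ((starRingEnd ℂ) (u i) * ((A i j : ℂ) * u j)).re
      = (u i).re * (A i j * (u j).re) + (u i).im * (A i j * (u j).im) := by
    intro i j
    simp [Complex.mul_re, Complex.mul_im]
  simp only [dotProduct, mulVec, Pi.star_apply, RCLike.star_def, Matrix.map_apply,
    Finset.mul_sum, Complex.re_sum, key, Finset.sum_add_distrib]

/-- Complex positive-definiteness from real positive-definiteness. -/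
lemma mgssp_aux_posdef {m : ℕ} (A : Matrix (Fin m) (Fin m) ℝ)
    (hA : ∀ x : Fin m → ℝ, x ≠ 0 → 0 < x ⬝ᵥ (A *ᵥ x))
    (u : Fin m → ℂ) (hu : u ≠ 0) :
    0 < (star u ⬝ᵥ (A.map Complex.ofReal *ᵥ u)).re := by
  rw [mgssp_aux_re_quad]
  set x : Fin m → ℝ := fun i => (u i).re with hx
  set y : Fin m → ℝ := fun i => (u i).im with hy
  have hnonneg : ∀ z : Fin m → ℝ, 0 ≤ z ⬝ᵥ (A *ᵥ z) := by
    intro z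
    by_cases hz : z = 0
    · simp [hz]
    · exact (hA z hz).le
  have hxy : x ≠ 0 ∨ y ≠ 0 := by
    by_contra h
    push_neg at h
    apply hu
    funext i
    have h1 := congrFun h.1 i
    have h2 := congrFun h.2 i
    exact Complex.ext h1 h2
  rcases hxy with h | h
  · exact add_pos_of_pos_of_nonneg (hA x h) (hnonneg y)
  · exact add_pos_of_nonneg_of_pos (hnonneg x) (hA y h)

/-- Full column rank gives injectivity of `mulVec` (real version). -/
lemma mgssp_aux_rank_inj {m n : ℕ} (B : Matrix (Fin m) (Fin n) ℝ) (hB : B.rank = n)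
    (p : Fin n → ℝ) (hp : B *ᵥ p = 0) : p = 0 := by
  have h := LinearMap.finrank_range_add_finrank_ker B.mulVecLin
  rw [Matrix.rank] at hB
  rw [hB, Module.finrank_pi, Fintype.card_fin] at h
  have hker : LinearMap.ker B.mulVecLin = ⊥ := by
    have : Module.finrank ℝ (LinearMap.ker B.mulVecLin) = 0 := by omega
    exact Submodule.finrank_eq_zero.mp this
  have : p ∈ LinearMap.ker B.mulVecLin := by
    simp [LinearMap.mem_ker, Matrix.mulVecLin_apply, hp]
  rw [hker] at this
  simpa using this

/-- Full column rank gives injectivity of `mulVec` (complex version). -/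
lemma mgssp_aux_rank_inj_c {m n : ℕ} (B : Matrix (Fin m) (Fin n) ℝ) (hB : B.rank = n)
    (v : Fin n → ℂ) (hv : B.map Complex.ofReal *ᵥ v = 0) : v = 0 := by
  have hre : B *ᵥ (fun j => (v j).re) = 0 := by
    funext i
    have := congrFun hv i
    have h2 : ((B.map Complex.ofReal *ᵥ v) i).re = (B *ᵥ fun j => (v j).re) i := by
      simp [mulVec, dotProduct, Complex.re_sum, Complex.mul_re]
    rw [this] at h2
    simpa using h2.symm
  have him : B *ᵥ (fun j => (v j).im) = 0 := by
    funext i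
    have := congrFun hv i
    have h2 : ((B.map Complex.ofReal *ᵥ v) i).im = (B *ᵥ fun j => (v j).im) i := by
      simp [mulVec, dotProduct, Complex.im_sum, Complex.mul_im]
    rw [this] at h2
    simpa using h2.symm
  have h1 := mgssp_aux_rank_inj B hB _ hre
  have h2 := mgssp_aux_rank_inj B hB _ him
  funext j
  exact Complex.ext (congrFun h1 j) (congrFun h2 j)

/-- Theorem 5.1 (case `Bᵀu = 0`, full column rank): for an eigenpair `(λ, (u,v))` of
the MGSSP preconditioned matrix with `Bᵀu = 0`, one has `u ≠ 0`, `v = 0`, `λ ≠ 0` and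
`λ = (a₁ + ib₁)/(α + 2a₁ + 2ib₁)` where `a₁ + ib₁` is the Rayleigh quotient of `A`
at `u`. -/
theorem mgssp_precond_eigenvalue_of_BTu_eq_zero {m n : ℕ}
    (A : Matrix (Fin m) (Fin m) ℝ) (B : Matrix (Fin m) (Fin n) ℝ)
    (hA : ∀ x : Fin m → ℝ, x ≠ 0 → 0 < x ⬝ᵥ (A *ᵥ x))
    (hB : B.rank = n)
    (α β : ℝ) (hα : 0 ≤ α) (hβ : 0 < β)
    (lam : ℂ) (u : Fin m → ℂ) (v : Fin n → ℂ) (hw : Sum.elim u v ≠ 0)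
    (heig : (Amat A B).map Complex.ofReal *ᵥ Sum.elim u v
        = lam • ((Pmat A B α β).map Complex.ofReal *ᵥ Sum.elim u v))
    (hBTu : Bᵀ.map Complex.ofReal *ᵥ u = 0)
    (a₁ b₁ : ℝ)
    (hab : (star u ⬝ᵥ (A.map Complex.ofReal *ᵥ u)) / (star u ⬝ᵥ u)
        = (a₁ : ℂ) + (b₁ : ℂ) * Complex.I) :
    u ≠ 0 ∧ v = 0 ∧ lam ≠ 0 ∧
      lam = ((a₁ : ℂ) + (b₁ : ℂ) * Complex.I)
          / ((α : ℂ) + 2 * (a₁ : ℂ) + 2 * (b₁ : ℂ) * Complex.I) := by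
  set Ac := A.map Complex.ofReal with hAc
  set Bc := B.map Complex.ofReal with hBc
  set Btc := Bᵀ.map Complex.ofReal with hBtc
  -- rewrite the eigen-equation in block form
  have hmapA : (Amat A B).map Complex.ofReal = fromBlocks Ac Bc (-Btc) 0 := by
    ext (i|i) (j|j) <;> simp [Amat, fromBlocks, Matrix.map_apply, hAc, hBc, hBtc]
  have hmapP : (Pmat A B α β).map Complex.ofReal
      = fromBlocks ((α:ℂ) • 1 + (2:ℂ) • Ac) ((2:ℂ) • Bc) (-((2:ℂ) • Btc)) ((β:ℂ) • 1) := by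
    ext (i|i) (j|j) <;>
      simp [Pmat, fromBlocks, Matrix.map_apply, Matrix.one_apply, apply_ite Complex.ofReal,
        hAc, hBc, hBtc]
  rw [hmapA, hmapP, fromBlocks_mulVec, fromBlocks_mulVec] at heig
  have htop : Ac *ᵥ u + Bc *ᵥ v
      = lam • (((α:ℂ) • 1 + (2:ℂ) • Ac) *ᵥ u + ((2:ℂ) • Bc) *ᵥ v) := by
    funext i
    have := congrFun heig (Sum.inl i)
    simpa using this
  -- bottom equation using Bᵀu = 0
  have hbot' : (0 : Fin n → ℂ) = (lam * β) • v := by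
    funext j
    have h := congrFun heig (Sum.inr j)
    simp [Matrix.neg_mulVec, Matrix.smul_mulVec, Matrix.one_mulVec, hBTu,
      smul_smul] at h ⊢
    tauto
  -- simplify the top equation
  have htop' : Ac *ᵥ u + Bc *ᵥ v
      = lam • ((α:ℂ) • u + (2:ℂ) • (Ac *ᵥ u) + (2:ℂ) • (Bc *ᵥ v)) := by
    rw [htop]
    congr 1
    rw [Matrix.add_mulVec, Matrix.smul_mulVec, Matrix.smul_mulVec,
      Matrix.smul_mulVec, Matrix.one_mulVec, add_assoc]
  -- star u kills Bc *ᵥ v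
  have hconj : Btc *ᵥ star u = 0 := by
    have : Btc *ᵥ star u = star (Btc *ᵥ u) := by
      funext j
      simp [hBtc, mulVec, dotProduct, map_sum, Complex.conj_ofReal]
    rw [this, hBTu]
    simp
  have hkill : star u ⬝ᵥ (Bc *ᵥ v) = 0 := by
    rw [Matrix.dotProduct_mulVec, ← Matrix.mulVec_transpose]
    have : Bcᵀ = Btc := by
      ext i j; simp [hBc, hBtc, Matrix.map_apply]
    rw [this, hconj]
    simp
  -- λ ≠ 0
  have hlam : lam ≠ 0 := by
    intro h0
    rw [h0, zero_smul] at htop'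
    have hbv : Ac *ᵥ u + Bc *ᵥ v = 0 := htop'
    have hq : star u ⬝ᵥ (Ac *ᵥ u) = 0 := by
      have := congrArg (fun w => star u ⬝ᵥ w) hbv
      simpa [dotProduct_add, hkill] using this
    have hu0 : u = 0 := by
      by_contra hu
      have := mgssp_aux_posdef A hA u hu
      rw [hAc] at hq
      rw [hq] at this
      simp at this
    have hv0 : v = 0 := by
      apply mgssp_aux_rank_inj_c B hB
      have h : Bc *ᵥ v = 0 := by
        rw [hu0] at hbv
        simpa using hbv
      exact h
    apply hw
    rw [hu0, hv0]
    funext i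
    cases i <;> simp
  -- v = 0
  have hv0 : v = 0 := by
    have hβ' : (lam * β) ≠ 0 := by
      apply mul_ne_zero hlam
      exact_mod_cast hβ.ne'
    have := hbot'.symm
    rcases smul_eq_zero.mp (by rw [this]) with h | h
    · exact absurd h hβ'
    · exact h
  have hu0 : u ≠ 0 := by
    intro h
    apply hw
    rw [h, hv0]
    funext i
    cases i <;> simp
  refine ⟨hu0, hv0, hlam, ?_⟩
  -- top equation with v = 0
  have htop'' : Ac *ᵥ u = lam • ((α:ℂ) • u + (2:ℂ) • (Ac *ᵥ u)) := by
    have := htop'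
    rw [hv0] at this
    simpa using this
  -- dot with star u
  set t := star u ⬝ᵥ (Ac *ᵥ u) with ht
  set s := star u ⬝ᵥ u with hs
  have heq : t = lam * ((α:ℂ) * s + 2 * t) := by
    have := congrArg (fun w => star u ⬝ᵥ w) htop''
    simpa [dotProduct_smul, dotProduct_add, smul_eq_mul, mul_add, ht, hs] using this
  -- s is a positive real
  have hσpos : (0:ℝ) < ∑ i, Complex.normSq (u i) := by
    obtain ⟨i, hi⟩ := Function.ne_iff.mp hu0
    exact Finset.sum_pos' (fun j _ => Complex.normSq_nonneg _)
      ⟨i, Finset.mem_univ i, Complex.normSq_pos.mpr hi⟩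
  have hsval : s = ((∑ i, Complex.normSq (u i) : ℝ) : ℂ) := by
    simp [hs, dotProduct, Complex.normSq_eq_conj_mul_self]
  have hsne : s ≠ 0 := by
    rw [hsval]
    exact_mod_cast hσpos.ne'
  -- t = (a₁ + b₁ i) s
  set c : ℂ := (a₁ : ℂ) + (b₁ : ℂ) * Complex.I with hc
  have htc : t = c * s := (div_eq_iff hsne).mp hab
  -- a₁ > 0
  have ha₁ : 0 < a₁ := by
    have htre : 0 < t.re := by
      rw [ht, hAc]
      exact mgssp_aux_posdef A hA u hu0
    have : t.re = a₁ * (∑ i, Complex.normSq (u i)) := by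
      rw [htc, hsval, hc]
      simp [Complex.mul_re]
    rw [this] at htre
    nlinarith [hσpos]
  -- finish
  have hden : (α:ℂ) + 2*(a₁:ℂ) + 2*(b₁:ℂ)*Complex.I = (α:ℂ) + 2*c := by
    rw [hc]; ring
  have hd : ((α:ℂ) + 2*c) ≠ 0 := by
    rw [hc]
    intro h
    have hre := congrArg Complex.re h
    simp at hre
    linarith
  have hcs : c * s = (lam * ((α:ℂ) + 2*c)) * s := by
    rw [htc] at heq
    linear_combination heq
  have hkey : c = lam * ((α:ℂ) + 2*c) := mul_right_cancel₀ hsne hcs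
  rw [hden, eq_div_iff hd]
  exact hkey.symm
end

section
/- Let A ∈ ℝ^{m×m} be positive definite, meaning xᵀAx > 0 for every nonzero x ∈ ℝ^m (A need not be symmetric), let B ∈ ℝ^{m×n} have full column rank (rank B = n), and let α ≥ 0, β > 0. Let m₀, M₀, s₀ ∈ ℝ with m₀ > 0 and s₀ ≥ 0 be such that for every nonzero u ∈ ℂ^m, m₀·(u*u) ≤ Re(u*Au) ≤ M₀·(u*u) and |Im(u*Au)| ≤ s₀·(u*u) (such constants are provided by the smallest and largest eigenvalues of the symmetric part H = (A+Aᵀ)/2 and the spectral radius of the skew-symmetric part S = (A−Aᵀ)/2). Suppose λ ∈ ℂ and w = (u, v) ∈ ℂ^{m+n} is nonzero with 𝒜w = λ P(α,β)w and Bᵀu = 0. Then m₀(α + 2m₀)/((α + 2M₀)² + 4s₀²) ≤ Re(λ) ≤ (M₀(α + 2M₀) + 2s₀²)/(α + 2m₀)², and |Im(λ)| ≤ α·s₀/(α + 2m₀)². -/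
/-!
With `Bᵀu = 0` the second block row of `𝒜w = λPw` reads `λβv = 0`. If `λ = 0`, the first row
`Au + Bv = 0` tested against `u` gives `u*Au = 0` (as `u*Bv = (Bᵀu)*v = 0`), so `u = 0`, and then
`v = 0` by injectivity of `B`. Otherwise `v = 0`, and the first row `Au = λ(αu + 2Au)` tested
against `u` gives `λ = z / (α + 2z)` for the Rayleigh quotient `z = u*Au / u*u`, whose real part
lies in `[m₀, M₀]` and whose imaginary part is at most `s₀` in absolute value. Writing
`z = a + ib`,
`Re λ = (a(α + 2a) + 2b²) / ((α + 2a)² + 4b²)` and `Im λ = αb / ((α + 2a)² + 4b²)`,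
and the bounds follow by comparing numerators and denominators.
-/

open Matrix

open ComplexOrder

namespace Matrix

variable {m n : Type*} [Fintype m] [Fintype n]

theorem mulVec_map_algebraMap_injective_s11 {K L : Type*} [Field K] [Field L] [Algebra K L]
    {B : Matrix m n K} (hB : B.rank = Fintype.card n) :
    Function.Injective (B.map (algebraMap K L)).mulVec := by
  have hcols : LinearIndependent K B.col := by
    rw [linearIndependent_iff_card_eq_finrank_span, ← hB, rank_eq_finrank_span_cols]
    rfl
  rw [mulVec_injective_iff]
  exact linearIndependent_algebraMap_comp_iff.mpr hcols

theorem star_dotProduct_mulVec_eq_zero {R : Type*} [CommSemiring R] [StarRing R]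
    {M : Matrix m n R} {u : m → R} (h : Mᴴ *ᵥ u = 0) (v : n → R) :
    star u ⬝ᵥ (M *ᵥ v) = 0 := by
  have : star u ᵥ* M = star (Mᴴ *ᵥ u) := by rw [star_mulVec, conjTranspose_conjTranspose]
  rw [dotProduct_mulVec, this, h, star_zero, zero_dotProduct]

theorem eq_zero_of_mulVec_add_mulVec_eq_zero {A : Matrix m m ℂ} {B : Matrix m n ℂ}
    (hA : ∀ u : m → ℂ, u ≠ 0 → 0 < (star u ⬝ᵥ (A *ᵥ u)).re) (hB : Function.Injective B.mulVec)
    {u : m → ℂ} {v : n → ℂ} (hBu : Bᴴ *ᵥ u = 0) (h : A *ᵥ u + B *ᵥ v = 0) :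
    u = 0 ∧ v = 0 := by
  have hu : u = 0 := by
    by_contra hu
    have hquad : star u ⬝ᵥ (A *ᵥ u) = 0 := by
      simpa [dotProduct_add, star_dotProduct_mulVec_eq_zero hBu] using congrArg (star u ⬝ᵥ ·) h
    simpa [hquad] using hA u hu
  subst hu
  exact ⟨rfl, hB (by simpa using h)⟩

theorem dotProduct_star_self_eq_ofReal_re (u : m → ℂ) :
    star u ⬝ᵥ u = ((star u ⬝ᵥ u).re : ℂ) :=
  Complex.ext rfl ((Complex.nonneg_iff.mp (dotProduct_star_self_nonneg u)).2.symm)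

theorem re_dotProduct_star_self_pos {u : m → ℂ} (hu : u ≠ 0) : 0 < (star u ⬝ᵥ u).re :=
  (Complex.pos_iff.mp (dotProduct_star_self_pos_iff.mpr hu)).1

noncomputable def rayleighQuotient (A : Matrix m m ℂ) (u : m → ℂ) : ℂ :=
  star u ⬝ᵥ (A *ᵥ u) / (star u ⬝ᵥ u)

theorem rayleighQuotient_bounds {A : Matrix m m ℂ} {u : m → ℂ} (hu : u ≠ 0) {m₀ M₀ s₀ : ℝ}
    (hRe : m₀ * (star u ⬝ᵥ u).re ≤ (star u ⬝ᵥ (A *ᵥ u)).re ∧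
      (star u ⬝ᵥ (A *ᵥ u)).re ≤ M₀ * (star u ⬝ᵥ u).re)
    (hIm : |(star u ⬝ᵥ (A *ᵥ u)).im| ≤ s₀ * (star u ⬝ᵥ u).re) :
    (m₀ ≤ (rayleighQuotient A u).re ∧ (rayleighQuotient A u).re ≤ M₀) ∧
      |(rayleighQuotient A u).im| ≤ s₀ := by
  have ht := re_dotProduct_star_self_pos hu
  rw [rayleighQuotient, dotProduct_star_self_eq_ofReal_re, Complex.div_ofReal_re,
    Complex.div_ofReal_im, abs_div, abs_of_pos ht, le_div_iff₀ ht, div_le_iff₀ ht, div_le_iff₀ ht]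
  exact ⟨hRe, hIm⟩

theorem mul_add_two_mul_rayleighQuotient {A : Matrix m m ℂ} {u : m → ℂ} (hu : u ≠ 0)
    {lam α : ℂ} (h : A *ᵥ u = lam • (α • u + (2 : ℂ) • (A *ᵥ u))) :
    lam * (α + 2 * rayleighQuotient A u) = rayleighQuotient A u := by
  have ht : star u ⬝ᵥ u ≠ 0 := dotProduct_star_self_eq_zero.not.mpr hu
  have hq := congrArg (star u ⬝ᵥ ·) h
  simp only [dotProduct_smul, dotProduct_add, smul_eq_mul] at hq
  rw [rayleighQuotient]
  field_simp
  linear_combination hq.symm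

end Matrix

theorem Matrix.conjTranspose_map_ofReal {m n : Type*} (B : Matrix m n ℝ) :
    (B.map Complex.ofReal)ᴴ = Bᵀ.map Complex.ofReal := by
  rw [← conjTranspose_map _ fun _ => (Complex.conj_ofReal _).symm,
    conjTranspose_eq_transpose_of_trivial]

theorem Complex.re_div_ofReal_add_two_mul (α : ℝ) (z : ℂ) :
    (z / (α + 2 * z)).re
      = (z.re * (α + 2 * z.re) + 2 * z.im ^ 2) / ((α + 2 * z.re) ^ 2 + 4 * z.im ^ 2) := by
  simp only [div_re, add_re, ofReal_re, mul_re, re_ofNat, im_ofNat, zero_mul, sub_zero,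
    normSq_apply, add_im, ofReal_im, mul_im, add_zero, zero_add]
  ring

theorem Complex.im_div_ofReal_add_two_mul (α : ℝ) (z : ℂ) :
    (z / (α + 2 * z)).im = α * z.im / ((α + 2 * z.re) ^ 2 + 4 * z.im ^ 2) := by
  simp only [div_im, add_re, ofReal_re, mul_re, re_ofNat, im_ofNat, zero_mul, sub_zero,
    normSq_apply, add_im, ofReal_im, mul_im, add_zero, zero_add]
  ring

namespace Complex

variable {α m₀ M₀ s₀ : ℝ} {z : ℂ}

theorem ofReal_add_two_mul_ne_zero (hα : 0 ≤ α) (hz : 0 < z.re) : (α : ℂ) + 2 * z ≠ 0 := by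
  intro h
  have hre := congrArg re h
  simp only [add_re, ofReal_re, mul_re, re_ofNat, im_ofNat, zero_mul, sub_zero, zero_re] at hre
  linarith

theorem le_re_div_ofReal_add_two_mul (hα : 0 ≤ α) (hm₀ : 0 < m₀) (hz₁ : m₀ ≤ z.re)
    (hz₂ : z.re ≤ M₀) (hz : |z.im| ≤ s₀) :
    m₀ * (α + 2 * m₀) / ((α + 2 * M₀) ^ 2 + 4 * s₀ ^ 2) ≤ (z / (α + 2 * z)).re := by
  have hre : 0 < z.re := hm₀.trans_le hz₁
  have hnum : m₀ * (α + 2 * m₀) ≤ z.re * (α + 2 * z.re) := by gcongr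
  have him : z.im ^ 2 ≤ s₀ ^ 2 := sq_le_sq.mpr (hz.trans (le_abs_self s₀))
  rw [re_div_ofReal_add_two_mul]
  apply div_le_div₀ (by positivity) (by linarith [sq_nonneg z.im]) (by positivity)
  gcongr

theorem re_div_ofReal_add_two_mul_le (hα : 0 ≤ α) (hm₀ : 0 < m₀) (hz₁ : m₀ ≤ z.re)
    (hz₂ : z.re ≤ M₀) (hz : |z.im| ≤ s₀) :
    (z / (α + 2 * z)).re ≤ (M₀ * (α + 2 * M₀) + 2 * s₀ ^ 2) / (α + 2 * m₀) ^ 2 := by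
  have hre : 0 < z.re := hm₀.trans_le hz₁
  have hM₀ : 0 < M₀ := hre.trans_le hz₂
  have hnum : z.re * (α + 2 * z.re) ≤ M₀ * (α + 2 * M₀) := by gcongr
  have hden : (α + 2 * m₀) ^ 2 ≤ (α + 2 * z.re) ^ 2 := by gcongr
  have him : z.im ^ 2 ≤ s₀ ^ 2 := sq_le_sq.mpr (hz.trans (le_abs_self s₀))
  rw [re_div_ofReal_add_two_mul]
  apply div_le_div₀ (by positivity) (by linarith) (by positivity)
  linarith [sq_nonneg z.im]

theorem abs_im_div_ofReal_add_two_mul_le (hα : 0 ≤ α) (hm₀ : 0 < m₀) (hz₁ : m₀ ≤ z.re)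
    (hz : |z.im| ≤ s₀) :
    |(z / (α + 2 * z)).im| ≤ α * s₀ / (α + 2 * m₀) ^ 2 := by
  have hre : 0 < z.re := hm₀.trans_le hz₁
  have hs₀ : 0 ≤ s₀ := (abs_nonneg z.im).trans hz
  have hden : (α + 2 * m₀) ^ 2 ≤ (α + 2 * z.re) ^ 2 := by gcongr
  rw [im_div_ofReal_add_two_mul, abs_div, abs_mul, abs_of_nonneg hα,
    abs_of_pos (by positivity : 0 < (α + 2 * z.re) ^ 2 + 4 * z.im ^ 2)]
  apply div_le_div₀ (by positivity) (by gcongr) (by positivity)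
  linarith [sq_nonneg z.im]

end Complex

section
variable {m n : ℕ} (A : Matrix (Fin m) (Fin m) ℝ) (B : Matrix (Fin m) (Fin n) ℝ)
  (u : Fin m → ℂ) (v : Fin n → ℂ)

theorem Amat_map_ofReal_mulVec :
    (Amat A B).map Complex.ofReal *ᵥ Sum.elim u v
      = Sum.elim (A.map Complex.ofReal *ᵥ u + B.map Complex.ofReal *ᵥ v)
          (-(Bᵀ.map Complex.ofReal *ᵥ u)) := by
  simp only [Amat, fromBlocks_map, Matrix.map_neg _ Complex.ofReal_neg, transpose_map,
    Complex.ofReal_zero, Matrix.map_zero, fromBlocks_mulVec, Sum.elim_comp_inl, Sum.elim_comp_inr,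
    neg_mulVec, zero_mulVec, add_zero]

theorem Pmat_map_ofReal_mulVec (α β : ℝ) :
    (Pmat A B α β).map Complex.ofReal *ᵥ Sum.elim u v
      = Sum.elim ((α : ℂ) • u + (2 : ℂ) • (A.map Complex.ofReal *ᵥ u + B.map Complex.ofReal *ᵥ v))
          ((β : ℂ) • v - (2 : ℂ) • (Bᵀ.map Complex.ofReal *ᵥ u)) := by
  have hP : (Pmat A B α β).map Complex.ofReal
      = fromBlocks ((α : ℂ) • 1 + (2 : ℂ) • A.map Complex.ofReal) ((2 : ℂ) • B.map Complex.ofReal)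
          (-((2 : ℂ) • Bᵀ.map Complex.ofReal)) ((β : ℂ) • 1) := by
    ext (i | i) (j | j) <;> simp [Pmat, one_apply, apply_ite Complex.ofReal]
  rw [hP, fromBlocks_mulVec]
  simp only [Sum.elim_comp_inl, Sum.elim_comp_inr, add_mulVec, neg_mulVec, smul_mulVec,
    one_mulVec]
  congr 1 <;> module
end

theorem mgssp_precond_eigenvalue_bounds_of_BTu_eq_zero_general {m n : ℕ}
    (A : Matrix (Fin m) (Fin m) ℝ) (B : Matrix (Fin m) (Fin n) ℝ)
    (hB : B.rank = n)
    (α β : ℝ) (hα : 0 ≤ α) (hβ : 0 < β)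
    (m₀ M₀ s₀ : ℝ) (hm₀ : 0 < m₀)
    (hRe : ∀ u : Fin m → ℂ, u ≠ 0 →
        m₀ * (star u ⬝ᵥ u).re ≤ (star u ⬝ᵥ (A.map Complex.ofReal *ᵥ u)).re ∧
        (star u ⬝ᵥ (A.map Complex.ofReal *ᵥ u)).re ≤ M₀ * (star u ⬝ᵥ u).re)
    (hIm : ∀ u : Fin m → ℂ, u ≠ 0 →
        |(star u ⬝ᵥ (A.map Complex.ofReal *ᵥ u)).im| ≤ s₀ * (star u ⬝ᵥ u).re)
    (lam : ℂ) (u : Fin m → ℂ) (v : Fin n → ℂ) (hw : Sum.elim u v ≠ 0)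
    (heig : (Amat A B).map Complex.ofReal *ᵥ Sum.elim u v
        = lam • ((Pmat A B α β).map Complex.ofReal *ᵥ Sum.elim u v))
    (hBTu : Bᵀ.map Complex.ofReal *ᵥ u = 0) :
    (m₀ * (α + 2 * m₀) / ((α + 2 * M₀) ^ 2 + 4 * s₀ ^ 2) ≤ lam.re ∧
        lam.re ≤ (M₀ * (α + 2 * M₀) + 2 * s₀ ^ 2) / (α + 2 * m₀) ^ 2) ∧
      |lam.im| ≤ α * s₀ / (α + 2 * m₀) ^ 2 := by
  rw [Amat_map_ofReal_mulVec, Pmat_map_ofReal_mulVec, hBTu] at heig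
  set AC := A.map Complex.ofReal
  set BC := B.map Complex.ofReal
  have hBCu : BCᴴ *ᵥ u = 0 := by rwa [conjTranspose_map_ofReal]
  have hblock₁ : AC *ᵥ u + BC *ᵥ v = lam • ((α : ℂ) • u + (2 : ℂ) • (AC *ᵥ u + BC *ᵥ v)) :=
    funext fun i => congrFun heig (Sum.inl i)
  have hblock₂ : -0 = lam • ((β : ℂ) • v - (2 : ℂ) • 0) :=
    funext fun j => congrFun heig (Sum.inr j)
  have hlam : lam ≠ 0 := by
    rintro rfl
    have hApos : ∀ x : Fin m → ℂ, x ≠ 0 → 0 < (star x ⬝ᵥ (AC *ᵥ x)).re := fun x hx =>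
      (mul_pos hm₀ (re_dotProduct_star_self_pos hx)).trans_le (hRe x hx).1
    obtain ⟨rfl, rfl⟩ := eq_zero_of_mulVec_add_mulVec_eq_zero hApos
      (mulVec_map_algebraMap_injective_s11 (hB.trans (Fintype.card_fin n).symm)) hBCu
      (by simpa using hblock₁)
    exact hw Sum.elim_zero_zero
  have hv : v = 0 := by simpa [hlam, hβ.ne', eq_comm] using hblock₂
  subst hv
  have hu : u ≠ 0 := fun h => hw (h ▸ Sum.elim_zero_zero)
  obtain ⟨⟨hz₁, hz₂⟩, hz⟩ := rayleighQuotient_bounds hu (hRe u hu) (hIm u hu)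
  have hlam_eq : lam = rayleighQuotient AC u / (α + 2 * rayleighQuotient AC u) := by
    refine eq_div_of_mul_eq (Complex.ofReal_add_two_mul_ne_zero hα (hm₀.trans_le hz₁))
      (mul_add_two_mul_rayleighQuotient hu (by simpa using hblock₁))
  rw [hlam_eq]
  exact ⟨⟨Complex.le_re_div_ofReal_add_two_mul hα hm₀ hz₁ hz₂ hz,
    Complex.re_div_ofReal_add_two_mul_le hα hm₀ hz₁ hz₂ hz⟩,
    Complex.abs_im_div_ofReal_add_two_mul_le hα hm₀ hz₁ hz⟩

/-- Inequalities (19) in Theorem 5.1: bounds for the real and imaginary parts of an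
eigenvalue `λ` of the MGSSP preconditioned matrix for eigenvectors whose first block
component satisfies `Bᵀu = 0`, in terms of bounds `m₀, M₀` on the Rayleigh quotient of
the symmetric part of `A` and a bound `s₀` on that of the skew-symmetric part. -/
theorem mgssp_precond_eigenvalue_bounds_of_BTu_eq_zero {m n : ℕ}
    (A : Matrix (Fin m) (Fin m) ℝ) (B : Matrix (Fin m) (Fin n) ℝ)
    (hA : ∀ x : Fin m → ℝ, x ≠ 0 → 0 < x ⬝ᵥ (A *ᵥ x))
    (hB : B.rank = n)
    (α β : ℝ) (hα : 0 ≤ α) (hβ : 0 < β)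
    (m₀ M₀ s₀ : ℝ) (hm₀ : 0 < m₀) (hs₀ : 0 ≤ s₀)
    (hRe : ∀ u : Fin m → ℂ, u ≠ 0 →
        m₀ * (star u ⬝ᵥ u).re ≤ (star u ⬝ᵥ (A.map Complex.ofReal *ᵥ u)).re ∧
        (star u ⬝ᵥ (A.map Complex.ofReal *ᵥ u)).re ≤ M₀ * (star u ⬝ᵥ u).re)
    (hIm : ∀ u : Fin m → ℂ, u ≠ 0 →
        |(star u ⬝ᵥ (A.map Complex.ofReal *ᵥ u)).im| ≤ s₀ * (star u ⬝ᵥ u).re)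
    (lam : ℂ) (u : Fin m → ℂ) (v : Fin n → ℂ) (hw : Sum.elim u v ≠ 0)
    (heig : (Amat A B).map Complex.ofReal *ᵥ Sum.elim u v
        = lam • ((Pmat A B α β).map Complex.ofReal *ᵥ Sum.elim u v))
    (hBTu : Bᵀ.map Complex.ofReal *ᵥ u = 0) :
    (m₀ * (α + 2 * m₀) / ((α + 2 * M₀) ^ 2 + 4 * s₀ ^ 2) ≤ lam.re ∧
        lam.re ≤ (M₀ * (α + 2 * M₀) + 2 * s₀ ^ 2) / (α + 2 * m₀) ^ 2) ∧
      |lam.im| ≤ α * s₀ / (α + 2 * m₀) ^ 2 :=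
  mgssp_precond_eigenvalue_bounds_of_BTu_eq_zero_general A B hB α β hα hβ m₀ M₀ s₀ hm₀ hRe hIm lam u
    v hw heig hBTu
end
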